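/- arXiv:1505.02003 — 3 statements merged into one kernel-verified Lean document; each statement's English description precedes it below -/
import Mathlib

section
/- Let b ≥ 2 be an integer, let a = (a_j)_{j≥1} be a nondecreasing sequence of real weights, let M ∈ ℝ, let ρ_b be the smallest prime factor of b, and let d, l be positive integers with d ≤ l and l ≥ M − a_1 − 1. If V_{s,a}(M) ≤ ρ_b^d, then there exist matrices G_1,…,G_s ∈ ℤ_b^{l×d} such that the digital net P = P(G_1,…,G_s) over ℤ_b with precision l has |P| = b^d and minimal weight δ_{P^⊥} = inf_{k ∈ P^⊥ \ {0}} μ'_a(k) ≥ M. -/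
open MeasureTheory Matrix Filter
open scoped ENNReal BigOperators Topology

noncomputable section

/-- The `b`-adic digit of `k : ℕ` at place `b^i` (i.e. the `(i+1)`-st digit). -/
def natDigit (b k i : ℕ) : ℕ := k / b ^ i % b

/-- The `(i+1)`-st `b`-adic digit of a real number `x ∈ [0,1)`
(using the expansion in which infinitely many digits differ from `b-1`). -/
def realDigit (b : ℕ) (x : ℝ) (i : ℕ) : ℕ := (⌊x * (b : ℝ) ^ (i + 1)⌋ % (b : ℤ)).toNat

/-- The `k`-th one-dimensional `b`-adic Walsh function. -/
def wal1 (b k : ℕ) (x : ℝ) : ℂ :=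
  Complex.exp (2 * Real.pi * Complex.I / (b : ℂ) *
    ((∑ i ∈ Finset.range k, natDigit b k i * realDigit b x i : ℕ) : ℂ))

/-- The `k`-th `s`-dimensional `b`-adic Walsh function. -/
def wal (b : ℕ) {s : ℕ} (k : Fin s → ℕ) (x : Fin s → ℝ) : ℂ :=
  ∏ j, wal1 b (k j) (x j)

/-- The unit cube `[0,1)^s`. -/
def unitCube (s : ℕ) : Set (Fin s → ℝ) := Set.univ.pi fun _ => Set.Ico (0 : ℝ) 1

/-- The `k`-th Walsh coefficient of `f`. -/
def walshCoeff (b : ℕ) {s : ℕ} (f : (Fin s → ℝ) → ℝ) (k : Fin s → ℕ) : ℂ :=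
  ∫ x in unitCube s, (f x : ℂ) * (starRingEnd ℂ) (wal b k x)

/-- The generalized Dick weight `μ_a(k)`, one-dimensional case. -/
def dickWt (b : ℕ) (a : ℝ) (k : ℕ) : ℝ :=
  ∑ i ∈ Finset.range k, if natDigit b k i ≠ 0 then ((i : ℝ) + 1 + a) else 0

/-- The generalized Dick weight `μ_a(k)` for vectors. -/
def dickWtV (b : ℕ) {s : ℕ} (a : Fin s → ℝ) (k : Fin s → ℕ) : ℝ :=
  ∑ j, dickWt b (a j) (k j)

/-- The modified Dick weight `μ'_a(k)`, one-dimensional case. -/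
def mdickWt (b : ℕ) (a : ℝ) (k : ℕ) : ℝ :=
  ∑ i ∈ Finset.range k, if natDigit b k i ≠ 0 then max ((i : ℝ) + 1 + a) 1 else 0

/-- The modified Dick weight `μ'_a(k)` for vectors. -/
def mdickWtV (b : ℕ) {s : ℕ} (a : Fin s → ℝ) (k : Fin s → ℕ) : ℝ :=
  ∑ j, mdickWt b (a j) (k j)

/-- Digitwise subtraction modulo `b` of natural numbers. -/
def dsub (b k k' : ℕ) : ℕ :=
  ∑ i ∈ Finset.range (k + k' + 1), ((natDigit b k i + (b - natDigit b k' i)) % b) * b ^ i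

/-- The integral of `f` over the unit cube. -/
def intBox (s : ℕ) (f : (Fin s → ℝ) → ℝ) : ℝ := ∫ x in unitCube s, f x

/-- Membership in the Walsh space `W_{s,a}`: `f` equals its (convergent) Walsh series
and has finite norm. -/
def MemW (b : ℕ) {s : ℕ} (a : Fin s → ℝ) (f : (Fin s → ℝ) → ℝ) : Prop :=
  (∀ x ∈ unitCube s, HasSum (fun k : Fin s → ℕ => walshCoeff b f k * wal b k x) ((f x : ℂ))) ∧
  BddAbove (Set.range fun k : Fin s → ℕ => ‖walshCoeff b f k‖ * (b : ℝ) ^ dickWtV b a k)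

/-- The norm of the Walsh space `W_{s,a}`. -/
def normW (b : ℕ) {s : ℕ} (a : Fin s → ℝ) (f : (Fin s → ℝ) → ℝ) : ℝ :=
  ⨆ k : Fin s → ℕ, ‖walshCoeff b f k‖ * (b : ℝ) ^ dickWtV b a k

/-- Membership in the modified Walsh space `W'_{s,a}`. -/
def MemW' (b : ℕ) {s : ℕ} (a : Fin s → ℝ) (f : (Fin s → ℝ) → ℝ) : Prop :=
  (∀ x ∈ unitCube s, HasSum (fun k : Fin s → ℕ => walshCoeff b f k * wal b k x) ((f x : ℂ))) ∧
  BddAbove (Set.range fun k : Fin s → ℕ => ‖walshCoeff b f k‖ * (b : ℝ) ^ mdickWtV b a k)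

/-- The norm of the modified Walsh space `W'_{s,a}`. -/
def normW' (b : ℕ) {s : ℕ} (a : Fin s → ℝ) (f : (Fin s → ℝ) → ℝ) : ℝ :=
  ⨆ k : Fin s → ℕ, ‖walshCoeff b f k‖ * (b : ℝ) ^ mdickWtV b a k

/-- The worst-case error of the algorithm `A` over the unit ball of `(H, N)`. -/
def worstErr (s : ℕ) (H : Set ((Fin s → ℝ) → ℝ)) (N : ((Fin s → ℝ) → ℝ) → ℝ)
    (A : ((Fin s → ℝ) → ℝ) → ℝ) : ℝ≥0∞ :=
  ⨆ (f : (Fin s → ℝ) → ℝ) (_ : f ∈ H) (_ : N f ≤ 1), ENNReal.ofReal |intBox s f - A f|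

/-- The `n`-th minimal worst-case error over all algorithms using `n` function values
at points of the unit cube. -/
def minErr (n s : ℕ) (H : Set ((Fin s → ℝ) → ℝ)) (N : ((Fin s → ℝ) → ℝ) → ℝ) : ℝ≥0∞ :=
  ⨅ (t : Fin n → Fin s → ℝ) (_ : ∀ i, t i ∈ unitCube s) (φ : (Fin n → ℝ) → ℝ),
    worstErr s H N fun f => φ fun i => f (t i)

/-- Partial derivative in the `j`-th coordinate. -/
def pd {s : ℕ} (j : Fin s) (f : (Fin s → ℝ) → ℝ) : (Fin s → ℝ) → ℝ :=
  fun x => deriv (fun t => f (Function.update x j t)) (x j)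

/-- The mixed partial derivative `f^{(α)}`. -/
def mpd {s : ℕ} (α : Fin s → ℕ) (f : (Fin s → ℝ) → ℝ) : (Fin s → ℝ) → ℝ :=
  (List.finRange s).foldr (fun j g => (pd j)^[α j] g) f

/-- Membership in the space `S_{s,u}` of smooth functions. -/
def MemS {s : ℕ} (u : Fin s → ℝ) (f : (Fin s → ℝ) → ℝ) : Prop :=
  ContDiff ℝ (⊤ : ℕ∞) f ∧
  BddAbove (Set.range fun α : Fin s → ℕ =>
    (∫ x in unitCube s, |mpd α f x|) / ∏ j, u j ^ α j)

/-- The norm of the space `S_{s,u}`. -/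
def normS {s : ℕ} (u : Fin s → ℝ) (f : (Fin s → ℝ) → ℝ) : ℝ :=
  ⨆ α : Fin s → ℕ, (∫ x in unitCube s, |mpd α f x|) / ∏ j, u j ^ α j

/-- The column vector of the first `m` `b`-adic digits of `k`. -/
def trunc (b m k : ℕ) : Fin m → ZMod b := fun i => (natDigit b k (i : ℕ) : ZMod b)

/-- The `m`-th point of the digital net determined by generating matrices `G`. -/
def netPoint (b : ℕ) {s l d : ℕ} (G : Fin s → Matrix (Fin l) (Fin d) (ZMod b)) (m : ℕ) :
    Fin s → ℝ :=
  fun j => ∑ i : Fin l, (((G j).mulVec (trunc b d m)) i).val / (b : ℝ) ^ ((i : ℕ) + 1)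

/-- The dual net of the digital net determined by `G`. -/
def dualNet (b : ℕ) {s l d : ℕ} (G : Fin s → Matrix (Fin l) (Fin d) (ZMod b)) :
    Set (Fin s → ℕ) :=
  {k | ∑ j, (G j)ᵀ.mulVec (trunc b l (k j)) = 0}

/-- The QMC algorithm given by the digital net with generating matrices `G`. -/
def qmcNet (b : ℕ) {s l d : ℕ} (G : Fin s → Matrix (Fin l) (Fin d) (ZMod b))
    (f : (Fin s → ℝ) → ℝ) : ℝ :=
  ((b : ℝ) ^ d)⁻¹ * ∑ m ∈ Finset.range (b ^ d), f (netPoint b G m)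

/-- `n_j = #{i ∈ ℕ : i + a ≤ 1}` (with `i` ranging over positive integers). -/
def negCount (a : ℝ) : ℕ := Set.ncard {i : ℕ | 0 < i ∧ (i : ℝ) + a ≤ 1}


/-! ### Auxiliary lemmas for Statement 12 -/

lemma natDigit_lt' {b : ℕ} (hb : 2 ≤ b) (k i : ℕ) : natDigit b k i < b :=
  Nat.mod_lt _ (by omega)

lemma pow_le_of_natDigit_ne {b k i : ℕ} (hb : 2 ≤ b) (h : natDigit b k i ≠ 0) : b ^ i ≤ k := by
  unfold natDigit at h
  have h1 : k / b ^ i ≠ 0 := fun h0 => h (by rw [h0]; simp)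
  rw [Nat.div_ne_zero_iff] at h1
  exact h1.2

lemma lt_of_natDigit_ne {b k i : ℕ} (hb : 2 ≤ b) (h : natDigit b k i ≠ 0) : i < k :=
  lt_of_lt_of_le (Nat.lt_pow_self (n := i) (by omega)) (pow_le_of_natDigit_ne hb h)

lemma natDigit_log_ne {b k : ℕ} (hb : 2 ≤ b) (hk : k ≠ 0) :
    natDigit b k (Nat.log b k) ≠ 0 := by
  unfold natDigit
  have h1 : b ^ Nat.log b k ≤ k := Nat.pow_log_le_self b hk
  have h2 : k < b ^ (Nat.log b k + 1) := Nat.lt_pow_succ_log_self (by omega) k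
  have h3 : 1 ≤ k / b ^ Nat.log b k := (Nat.one_le_div_iff (Nat.pow_pos (by omega))).2 h1
  have h4 : k / b ^ Nat.log b k < b := by
    rw [Nat.div_lt_iff_lt_mul (Nat.pow_pos (by omega))]
    calc k < b ^ (Nat.log b k + 1) := h2
    _ = b * b ^ Nat.log b k := by ring
  rw [Nat.mod_eq_of_lt h4]
  omega

lemma natDigit_pow_self {b l : ℕ} (hb : 2 ≤ b) {i : ℕ} (hi : i < l) :
    natDigit b (b ^ l) i = 0 := by
  unfold natDigit
  rw [Nat.pow_div (by omega) (by omega)]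
  have : b ∣ b ^ (l - i) := dvd_pow_self b (by omega)
  omega

lemma natDigit_zero' (b i : ℕ) : natDigit b 0 i = 0 := by simp [natDigit]

lemma mdickWt_nonneg (b : ℕ) (a : ℝ) (k : ℕ) : 0 ≤ mdickWt b a k := by
  apply Finset.sum_nonneg
  intro i _
  split
  · exact le_trans zero_le_one (le_max_right _ _)
  · exact le_refl 0

lemma term_le_mdickWt {b : ℕ} (hb : 2 ≤ b) {a : ℝ} {k i : ℕ} (h : natDigit b k i ≠ 0) :
    max ((i : ℝ) + 1 + a) 1 ≤ mdickWt b a k := by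
  have hi : i ∈ Finset.range k := Finset.mem_range.2 (lt_of_natDigit_ne hb h)
  calc max ((i : ℝ) + 1 + a) 1
      = if natDigit b k i ≠ 0 then max ((i : ℝ) + 1 + a) 1 else 0 := by simp [h]
    _ ≤ mdickWt b a k := Finset.single_le_sum (f := fun i =>
        if natDigit b k i ≠ 0 then max ((i : ℝ) + 1 + a) 1 else 0)
        (fun i _ => by split
                       · exact le_trans zero_le_one (le_max_right _ _)
                       · exact le_refl 0) hi

lemma mdickWt_le_mdickWtV (b : ℕ) {s : ℕ} (a : Fin s → ℝ) (k : Fin s → ℕ) (j : Fin s) :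
    mdickWt b (a j) (k j) ≤ mdickWtV b a k :=
  Finset.single_le_sum (fun j _ => mdickWt_nonneg b (a j) (k j)) (Finset.mem_univ j)

lemma mdickWtV_nonneg (b : ℕ) {s : ℕ} (a : Fin s → ℝ) (k : Fin s → ℕ) :
    0 ≤ mdickWtV b a k :=
  Finset.sum_nonneg fun j _ => mdickWt_nonneg b (a j) (k j)

lemma ker_card_mul_le {b : ℕ} (hb : 2 ≤ b) {W : Type*} [AddCommGroup W] [Fintype W]
    (f : W →+ ZMod b) (c : ZMod b) (hc : c ≠ 0) (hcr : c ∈ f.range) :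
    Fintype.card {w : W // f w = 0} * Nat.minFac b ≤ Fintype.card W := by
  haveI : NeZero b := ⟨by omega⟩
  have hlag : Nat.card W = Nat.card (W ⧸ f.ker) * Nat.card f.ker :=
    AddSubgroup.card_eq_card_quotient_mul_card_addSubgroup f.ker
  have hq : Nat.card (W ⧸ f.ker) = Nat.card f.range :=
    Nat.card_congr (QuotientAddGroup.quotientKerEquivRange f).toEquiv
  have hdvd : Nat.card f.range ∣ b := by
    have h := AddSubgroup.card_addSubgroup_dvd_card f.range
    rwa [Nat.card_zmod] at h
  have hnt : 1 < Nat.card f.range := by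
    have : Nontrivial f.range := ⟨⟨⟨c, hcr⟩, 0, by simp [Subtype.ext_iff, hc]⟩⟩
    exact Finite.one_lt_card_iff_nontrivial.mpr this
  have hrho : Nat.minFac b ≤ Nat.card f.range := by
    have hp : Nat.Prime (Nat.minFac (Nat.card f.range)) :=
      Nat.minFac_prime (by omega)
    have h2 : Nat.minFac b ≤ Nat.minFac (Nat.card f.range) :=
      Nat.minFac_le_of_dvd hp.two_le ((Nat.minFac_dvd _).trans hdvd)
    exact h2.trans (Nat.minFac_le (by omega))
  have hker : Fintype.card {w : W // f w = 0} = Nat.card f.ker := by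
    rw [Nat.card_eq_fintype_card]
    exact Fintype.card_congr (Equiv.subtypeEquivRight (fun w => (f.mem_ker).symm)).symm
  calc Fintype.card {w : W // f w = 0} * Nat.minFac b
      = Nat.card f.ker * Nat.minFac b := by rw [hker]
    _ ≤ Nat.card f.ker * Nat.card f.range := Nat.mul_le_mul_left _ hrho
    _ = Nat.card W := by rw [hlag, hq]; ring
    _ = Fintype.card W := Nat.card_eq_fintype_card

/-- The bilinear pairing used for the dual net condition. -/
def phiMap (b s l : ℕ) (v : Fin s → Fin l → ZMod b) :
    (Fin s → Fin l → ZMod b) →+ ZMod b where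
  toFun w := ∑ j, ∑ i, v j i * w j i
  map_zero' := by simp
  map_add' x y := by
    simp [mul_add, Finset.sum_add_distrib]

lemma phiMap_single {b s l : ℕ} (v : Fin s → Fin l → ZMod b) (j₀ : Fin s) (i₀ : Fin l) :
    phiMap b s l v (Pi.single j₀ (Pi.single i₀ 1)) = v j₀ i₀ := by
  classical
  show (∑ j, ∑ i, v j i *
      (Pi.single j₀ (Pi.single i₀ (1 : ZMod b)) : Fin s → Fin l → ZMod b) j i) = v j₀ i₀
  rw [Finset.sum_eq_single j₀]
  · rw [Finset.sum_eq_single i₀]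
    · simp
    · intro i _ hi; simp [Pi.single_apply, hi]
    · simp
  · intro j _ hj; simp [Pi.single_apply, hj]
  · simp

lemma dualSum_eq_zero_iff {b s l d : ℕ} (v : Fin s → Fin l → ZMod b)
    (G : Fin s → Matrix (Fin l) (Fin d) (ZMod b)) :
    (∑ j, (G j)ᵀ.mulVec (v j)) = 0 ↔
      ∀ c : Fin d, phiMap b s l v (fun j i => G j i c) = 0 := by
  rw [funext_iff]
  apply forall_congr'
  intro c
  show (∑ j, (G j)ᵀ.mulVec (v j)) c = (0 : Fin d → ZMod b) c ↔ _
  simp only [Finset.sum_apply, Pi.zero_apply]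
  constructor <;> intro h <;> [skip; skip] <;>
  · rw [show (phiMap b s l v fun j i => G j i c) = ∑ j, ∑ i, v j i * G j i c from rfl] at *
    convert h using 2 with j
    simp [Matrix.mulVec, dotProduct, Matrix.transpose_apply, mul_comm]

lemma exists_good_map {b : ℕ} (hb : 2 ≤ b) {s l d : ℕ} (hd : 0 < d)
    (B : Finset (Fin s → Fin l → ZMod b)) (h0 : (0 : Fin s → Fin l → ZMod b) ∉ B)
    (hB : B.card < (Nat.minFac b) ^ d) :
    ∃ G : Fin s → Matrix (Fin l) (Fin d) (ZMod b),
      ∀ v ∈ B, (∑ j, (G j)ᵀ.mulVec (v j)) ≠ 0 := by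
  haveI : NeZero b := ⟨by omega⟩
  classical
  set ρ := Nat.minFac b with hρ
  let colEq : (Fin s → Matrix (Fin l) (Fin d) (ZMod b)) ≃ (Fin d → (Fin s → Fin l → ZMod b)) :=
    { toFun := fun G c j i => G j i c
      invFun := fun h j => Matrix.of fun i c => h c j i
      left_inv := fun G => rfl
      right_inv := fun h => rfl }
  have hcardΓ : Fintype.card (Fin s → Matrix (Fin l) (Fin d) (ZMod b)) =
      Fintype.card (Fin s → Fin l → ZMod b) ^ d := by
    rw [Fintype.card_congr colEq, Fintype.card_fun, Fintype.card_fin]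
  have hcardΓpos : 0 < Fintype.card (Fin s → Matrix (Fin l) (Fin d) (ZMod b)) := Fintype.card_pos
  have hbadv : ∀ v ∈ B,
      (Finset.univ.filter (fun G : (Fin s → Matrix (Fin l) (Fin d) (ZMod b)) =>
        (∑ j, (G j)ᵀ.mulVec (v j)) = 0)).card * ρ ^ d
        ≤ Fintype.card (Fin s → Matrix (Fin l) (Fin d) (ZMod b)) := by
    intro v hv
    have hvne : v ≠ 0 := fun h => h0 (h ▸ hv)
    obtain ⟨j₀, hj₀⟩ := Function.ne_iff.mp hvne
    obtain ⟨i₀, hi₀⟩ := Function.ne_iff.mp hj₀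
    have hcr : v j₀ i₀ ∈ (phiMap b s l v).range :=
      ⟨Pi.single j₀ (Pi.single i₀ 1), phiMap_single v j₀ i₀⟩
    have hker := ker_card_mul_le hb (phiMap b s l v) (v j₀ i₀) hi₀ hcr
    have e : {G : (Fin s → Matrix (Fin l) (Fin d) (ZMod b)) //
        (∑ j, (G j)ᵀ.mulVec (v j)) = 0} ≃
        (Fin d → {w : (Fin s → Fin l → ZMod b) // phiMap b s l v w = 0}) :=
      { toFun := fun G c => ⟨fun j i => G.1 j i c, (dualSum_eq_zero_iff v G.1).mp G.2 c⟩
        invFun := fun h => ⟨fun j => Matrix.of fun i c => (h c).1 j i,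
          (dualSum_eq_zero_iff v _).mpr fun c => (h c).2⟩
        left_inv := fun G => by ext j i c; rfl
        right_inv := fun h => by ext c j i; rfl }
    have hcount : (Finset.univ.filter (fun G : (Fin s → Matrix (Fin l) (Fin d) (ZMod b)) =>
        (∑ j, (G j)ᵀ.mulVec (v j)) = 0)).card
        = Fintype.card {w : (Fin s → Fin l → ZMod b) // phiMap b s l v w = 0} ^ d := by
      rw [← Fintype.card_subtype, Fintype.card_congr e, Fintype.card_fun, Fintype.card_fin]
    rw [hcount, hcardΓ, ← Nat.mul_pow]
    exact Nat.pow_le_pow_left hker d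
  let Bad : Finset (Fin s → Matrix (Fin l) (Fin d) (ZMod b)) :=
    B.biUnion (fun v => Finset.univ.filter
      (fun G : (Fin s → Matrix (Fin l) (Fin d) (ZMod b)) => (∑ j, (G j)ᵀ.mulVec (v j)) = 0))
  have hBadcard : Bad.card < Fintype.card (Fin s → Matrix (Fin l) (Fin d) (ZMod b)) := by
    have h1 : Bad.card * ρ ^ d ≤
        B.card * Fintype.card (Fin s → Matrix (Fin l) (Fin d) (ZMod b)) := by
      calc Bad.card * ρ ^ d
          ≤ (∑ v ∈ B, (Finset.univ.filter
              (fun G : (Fin s → Matrix (Fin l) (Fin d) (ZMod b)) =>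
                (∑ j, (G j)ᵀ.mulVec (v j)) = 0)).card) * ρ ^ d :=
            Nat.mul_le_mul_right _ Finset.card_biUnion_le
        _ = ∑ v ∈ B, (Finset.univ.filter
              (fun G : (Fin s → Matrix (Fin l) (Fin d) (ZMod b)) =>
                (∑ j, (G j)ᵀ.mulVec (v j)) = 0)).card * ρ ^ d := by
            rw [Finset.sum_mul]
        _ ≤ ∑ _v ∈ B, Fintype.card (Fin s → Matrix (Fin l) (Fin d) (ZMod b)) :=
            Finset.sum_le_sum hbadv
        _ = B.card * Fintype.card (Fin s → Matrix (Fin l) (Fin d) (ZMod b)) := by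
            rw [Finset.sum_const, smul_eq_mul]
    have h2 : B.card * Fintype.card (Fin s → Matrix (Fin l) (Fin d) (ZMod b)) <
        ρ ^ d * Fintype.card (Fin s → Matrix (Fin l) (Fin d) (ZMod b)) :=
      (Nat.mul_lt_mul_right hcardΓpos).mpr hB
    have h3 : Bad.card * ρ ^ d <
        Fintype.card (Fin s → Matrix (Fin l) (Fin d) (ZMod b)) * ρ ^ d := by
      calc Bad.card * ρ ^ d
          ≤ B.card * Fintype.card (Fin s → Matrix (Fin l) (Fin d) (ZMod b)) := h1
        _ < ρ ^ d * Fintype.card (Fin s → Matrix (Fin l) (Fin d) (ZMod b)) := h2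
        _ = Fintype.card (Fin s → Matrix (Fin l) (Fin d) (ZMod b)) * ρ ^ d := Nat.mul_comm _ _
    exact Nat.lt_of_mul_lt_mul_right h3
  have hne : (Badᶜ : Finset (Fin s → Matrix (Fin l) (Fin d) (ZMod b))).Nonempty := by
    rw [← Finset.card_pos, Finset.card_compl]
    omega
  obtain ⟨G, hG⟩ := hne
  refine ⟨G, fun v hv hzero => ?_⟩
  exact (Finset.mem_compl.mp hG) (Finset.mem_biUnion.mpr
    ⟨v, hv, Finset.mem_filter.mpr ⟨Finset.mem_univ _, hzero⟩⟩)


/-- if `V_{s,a}(M) ≤ ρ_b^d` and `l ≥ M - a_1 - 1` (with `d ≤ l`), then there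
exist generating matrices of a digital net with `b^d` points whose dual net has minimal
modified Dick weight at least `M`. -/
theorem statement12 (b : ℕ) (hb : 2 ≤ b) (s : ℕ) (hs : 0 < s)
    (a : ℕ → ℝ) (ha : Monotone a) (M : ℝ)
    (d l : ℕ) (hd : 0 < d) (hdl : d ≤ l) (hl : M - a 0 - 1 ≤ (l : ℝ))
    (hV : Set.ncard {k : Fin s → ℕ | mdickWtV b (fun j : Fin s => a j) k ≤ M} ≤
      (Nat.minFac b) ^ d) :
    ∃ G : Fin s → Matrix (Fin l) (Fin d) (ZMod b),
      M ≤ sInf (mdickWtV b (fun j : Fin s => a j) '' (dualNet b G \ {0})) := by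
  classical
  haveI : NeZero b := ⟨by omega⟩
  set a' : Fin s → ℝ := fun j : Fin s => a j with ha'
  set A : Set (Fin s → ℕ) := {k : Fin s → ℕ | mdickWtV b a' k ≤ M} with hA
  have hkey : ∀ k ∈ A, ∀ (j : Fin s) (i : ℕ), natDigit b (k j) i ≠ 0 → (i : ℝ) ≤ (l : ℝ) := by
    intro k hk j i hdig
    have h1 : max ((i : ℝ) + 1 + a' j) 1 ≤ mdickWt b (a' j) (k j) := term_le_mdickWt hb hdig
    have h2 := mdickWt_le_mdickWtV b a' k j
    have h3 : ((i : ℝ) + 1 + a' j) ≤ max ((i : ℝ) + 1 + a' j) 1 := le_max_left _ _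
    have h4 : a 0 ≤ a' j := ha (Nat.zero_le _)
    have h5 : mdickWtV b a' k ≤ M := hk
    simp only [ha'] at h4
    linarith
  have hAfin : A.Finite := by
    have hsub : A ⊆ Set.pi Set.univ (fun _ : Fin s => Set.Iio (b ^ (l + 1))) := by
      intro k hk j _
      simp only [Set.mem_Iio]
      by_contra hge
      push_neg at hge
      have hkj : k j ≠ 0 := by
        have : 0 < b ^ (l + 1) := Nat.pow_pos (by omega)
        omega
      have hlog : l + 1 ≤ Nat.log b (k j) := (Nat.le_log_iff_pow_le (by omega) hkj).mpr hge
      have hdig := natDigit_log_ne hb hkj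
      have h6 := hkey k hk j _ hdig
      have h7 : ((l : ℝ) + 1) ≤ (Nat.log b (k j) : ℝ) := by exact_mod_cast hlog
      linarith
    exact Set.Finite.subset (Set.Finite.pi (fun j => Set.finite_Iio _)) hsub
  set τ : (Fin s → ℕ) → (Fin s → Fin l → ZMod b) :=
    fun k j => trunc b l (k j) with hτdef
  set B : Finset (Fin s → Fin l → ZMod b) := (hAfin.toFinset.image τ).erase 0 with hBdef
  have h0B : (0 : Fin s → Fin l → ZMod b) ∉ B := Finset.notMem_erase _ _
  have hρ2 : 2 ≤ Nat.minFac b := (Nat.minFac_prime (by omega)).two_le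
  have hρd : 1 ≤ Nat.minFac b ^ d := Nat.one_le_pow _ _ (by omega)
  have hBcard : B.card < Nat.minFac b ^ d := by
    by_cases hAne : A.Nonempty
    · obtain ⟨k, hk⟩ := hAne
      have hM0 : (0 : ℝ) ≤ M := le_trans (mdickWtV_nonneg b a' k) hk
      have h0A : (0 : Fin s → ℕ) ∈ A := by
        have : mdickWtV b a' (0 : Fin s → ℕ) = 0 := by
          simp [mdickWtV, mdickWt]
        simp only [hA, Set.mem_setOf_eq]
        rw [this]
        exact hM0
      have h0img : (0 : Fin s → Fin l → ZMod b) ∈ hAfin.toFinset.image τ := by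
        refine Finset.mem_image.mpr ⟨0, ?_, ?_⟩
        · rwa [Set.Finite.mem_toFinset]
        · funext j i
          simp [hτdef, trunc, natDigit_zero']
      have h1 : B.card = (hAfin.toFinset.image τ).card - 1 := by
        rw [hBdef, Finset.card_erase_of_mem h0img]
      have h2 : (hAfin.toFinset.image τ).card ≤ hAfin.toFinset.card := Finset.card_image_le
      have h3 : hAfin.toFinset.card = A.ncard := (Set.ncard_eq_toFinset_card A hAfin).symm
      have h4 : 1 ≤ (hAfin.toFinset.image τ).card := Finset.card_pos.mpr ⟨0, h0img⟩
      have h5 : A.ncard ≤ Nat.minFac b ^ d := hV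
      omega
    · have he : hAfin.toFinset = ∅ := by
        simp [Set.Finite.toFinset_eq_empty, Set.not_nonempty_iff_eq_empty.mp hAne]
      have : B.card = 0 := by simp [hBdef, he]
      omega
  obtain ⟨G, hG⟩ := exists_good_map hb hd B h0B hBcard
  refine ⟨G, ?_⟩
  apply le_csInf
  · refine ⟨mdickWtV b a' (fun _ => b ^ l), ⟨fun _ => b ^ l, ⟨?_, ?_⟩, rfl⟩⟩
    · show (∑ j, (G j)ᵀ.mulVec (trunc b l (b ^ l))) = 0
      have htr : trunc b l (b ^ l) = (0 : Fin l → ZMod b) := by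
        funext i
        simp [trunc, natDigit_pow_self hb i.isLt]
      rw [htr]
      simp
    · simp only [Set.mem_singleton_iff]
      intro h
      have h0 := congrFun h ⟨0, hs⟩
      have : b ^ l ≠ 0 := Nat.pos_iff_ne_zero.mp (Nat.pow_pos (by omega))
      exact this h0
  · rintro x ⟨k, ⟨hkd, hk0⟩, rfl⟩
    by_cases hτ0 : τ k = 0
    · have hkne : k ≠ 0 := by simpa using hk0
      obtain ⟨j, hj⟩ := Function.ne_iff.mp hkne
      have hjne : k j ≠ 0 := by simpa using hj
      have hdig := natDigit_log_ne hb hjne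
      have hi₀l : l ≤ Nat.log b (k j) := by
        by_contra hlt
        push_neg at hlt
        have hz : τ k j ⟨Nat.log b (k j), hlt⟩ = 0 := by rw [hτ0]; rfl
        have hcast : ((natDigit b (k j) (Nat.log b (k j)) : ℕ) : ZMod b) = 0 := hz
        have hdvd := (ZMod.natCast_eq_zero_iff _ _).mp hcast
        have hlt2 := natDigit_lt' hb (k j) (Nat.log b (k j))
        have : natDigit b (k j) (Nat.log b (k j)) = 0 :=
          Nat.eq_zero_of_dvd_of_lt hdvd hlt2
        exact hdig this
      have h1 : max ((Nat.log b (k j) : ℝ) + 1 + a' j) 1 ≤ mdickWt b (a' j) (k j) :=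
        term_le_mdickWt hb hdig
      have h2 := mdickWt_le_mdickWtV b a' k j
      have h3 : a 0 ≤ a' j := ha (Nat.zero_le _)
      have h4 : (l : ℝ) ≤ (Nat.log b (k j) : ℝ) := by exact_mod_cast hi₀l
      have h5 : ((Nat.log b (k j) : ℝ) + 1 + a' j) ≤
          max ((Nat.log b (k j) : ℝ) + 1 + a' j) 1 := le_max_left _ _
      linarith
    · by_contra hnot
      push_neg at hnot
      have hkA : k ∈ A := le_of_lt hnot
      have hτB : τ k ∈ B := Finset.mem_erase.mpr ⟨hτ0,
        Finset.mem_image.mpr ⟨k, (Set.Finite.mem_toFinset _).mpr hkA, rfl⟩⟩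
      exact hG (τ k) hτB hkd


end
end

section
/- Let r > 0, a > 0, s ∈ ℕ, and 0 < X < 1. Then ∑_{j=1}^s X^{a·j^r} ≤ r^{−1}·Γ(1/r)·(a·log(X^{−1}))^{−1/r}, where Γ is the Gamma function Γ(z) = ∫_0^∞ t^{z−1} e^{−t} dt. -/
open MeasureTheory Matrix Filter
open scoped ENNReal BigOperators Topology

noncomputable section

open Set in
private lemma statement16_aux (r a : ℝ) (hr : 0 < r) (ha : 0 < a) (s : ℕ) (hs : 0 < s)
    (X : ℝ) (hX0 : 0 < X) (hX1 : X < 1) :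
    ∑ j ∈ Finset.Icc 1 s, X ^ (a * (j : ℝ) ^ r) ≤
      r⁻¹ * Real.Gamma (1 / r) * (a * Real.log X⁻¹) ^ (-(1 / r)) := by
  have hlogX : Real.log X < 0 := Real.log_neg hX0 hX1
  set c : ℝ := a * Real.log X⁻¹ with hc_def
  have hc : 0 < c := by
    rw [hc_def, Real.log_inv]
    nlinarith
  set g : ℝ → ℝ := fun t => Real.exp (-c * t ^ r) with hg_def
  have hsummand : ∀ j : ℕ, X ^ (a * (j : ℝ) ^ r) = g (j : ℝ) := by
    intro j
    rw [hg_def]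
    simp only
    rw [Real.rpow_def_of_pos hX0]
    congr 1
    rw [hc_def, Real.log_inv]
    ring
  have hanti : AntitoneOn g (Icc (0:ℝ) (0 + s)) := by
    intro x hx y hy hxy
    apply Real.exp_le_exp.2
    have : x ^ r ≤ y ^ r := Real.rpow_le_rpow hx.1 hxy hr.le
    nlinarith
  have hsum := hanti.sum_le_integral (f := g) (x₀ := 0) (a := s)
  have hint : IntegrableOn g (Ioi 0) := by
    have h1 : IntegrableOn (fun x : ℝ => x ^ (1/r - 1) * Real.exp (-c * x ^ (1:ℝ))) (Ioi 0) :=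
      integrableOn_rpow_mul_exp_neg_mul_rpow (by
        have : 0 < 1/r := by positivity
        linarith) zero_lt_one hc
    have h2 := (integrableOn_Ioi_comp_rpow_iff'
      (fun x : ℝ => x ^ (1/r - 1) * Real.exp (-c * x ^ (1:ℝ))) (p := r) hr.ne').2 h1
    refine h2.congr_fun (fun x hx => ?_) measurableSet_Ioi
    have hx0 : (0:ℝ) < x := hx
    simp only [smul_eq_mul, Real.rpow_one]
    rw [← Real.rpow_mul hx0.le, ← mul_assoc, ← Real.rpow_add hx0]
    have h3 : r - 1 + r * (1/r - 1) = 0 := by field_simp; ring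
    rw [h3, Real.rpow_zero, one_mul]
  -- main chain
  have hval : ∫ x in Ioi (0:ℝ), g x = c ^ (-1/r) * Real.Gamma (1/r + 1) :=
    integral_exp_neg_mul_rpow hr hc
  have hintle : ∫ x in (0:ℝ)..(0 + s), g x ≤ ∫ x in Ioi (0:ℝ), g x := by
    rw [intervalIntegral.integral_of_le (by positivity)]
    apply setIntegral_mono_set hint
    · filter_upwards with x using Real.exp_nonneg _
    · filter_upwards with x hx using hx.1
  have hsum2 : ∑ j ∈ Finset.Icc 1 s, X ^ (a * (j : ℝ) ^ r)
      = ∑ i ∈ Finset.range s, g (0 + ((i + 1 : ℕ) : ℝ)) := by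
    rw [show Finset.Icc 1 s = Finset.image (· + 1) (Finset.range s) by
      ext x
      simp only [Finset.mem_Icc, Finset.mem_image, Finset.mem_range]
      constructor
      · rintro ⟨h1, h2⟩; exact ⟨x - 1, by omega, by omega⟩
      · rintro ⟨y, hy, rfl⟩; omega]
    rw [Finset.sum_image (by intro x _ y _ h; exact Nat.succ_injective h)]
    refine Finset.sum_congr rfl fun i _ => ?_
    rw [hsummand]
    push_cast
    ring_nf
  calc ∑ j ∈ Finset.Icc 1 s, X ^ (a * (j : ℝ) ^ r)
      = ∑ i ∈ Finset.range s, g (0 + ((i + 1 : ℕ) : ℝ)) := hsum2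
    _ ≤ ∫ x in (0:ℝ)..(0 + s), g x := hsum
    _ ≤ ∫ x in Ioi (0:ℝ), g x := hintle
    _ = c ^ (-1/r) * Real.Gamma (1/r + 1) := hval
    _ = r⁻¹ * Real.Gamma (1 / r) * c ^ (-(1 / r)) := by
        rw [Real.Gamma_add_one (by positivity), neg_div]
        ring


/-- `∑_{j=1}^s X^{a·j^r} ≤ r⁻¹·Γ(1/r)·(a·log(X⁻¹))^{-1/r}`
for `r, a > 0` and `0 < X < 1`. -/
theorem statement16 (r a : ℝ) (hr : 0 < r) (ha : 0 < a) (s : ℕ) (hs : 0 < s)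
    (X : ℝ) (hX0 : 0 < X) (hX1 : X < 1) :
    ∑ j ∈ Finset.Icc 1 s, X ^ (a * (j : ℝ) ^ r) ≤
      r⁻¹ * Real.Gamma (1 / r) * (a * Real.log X⁻¹) ^ (-(1 / r)) := by
  exact statement16_aux r a hr ha s hs X hX0 hX1

end
end

section
/- Let b ≥ 2 be an integer, s ∈ ℕ, a = (a_1,…,a_s) ∈ ℝ^s, and X ∈ (0,1). Then the series ∑_{k ∈ ℕ₀^s} X^{μ_a(k)} converges and equals the convergent infinite product ∏_{j=1}^s ∏_{i=1}^∞ (1 + (b−1)·X^{i + a_j}). Likewise, ∑_{k ∈ ℕ₀^s} X^{μ'_a(k)} = ∏_{j=1}^s ∏_{i=1}^∞ (1 + (b−1)·X^{max(i + a_j, 1)}). -/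
open MeasureTheory Matrix Filter
open scoped ENNReal BigOperators Topology

noncomputable section

set_option maxHeartbeats 1000000

namespace S19

lemma digit_zero_of_lt {b k i : ℕ} (h : k < b ^ i) : natDigit b k i = 0 := by
  simp [natDigit, Nat.div_eq_of_lt h]

lemma digit_zero_of_le {b : ℕ} (hb : 2 ≤ b) {k i : ℕ} (h : k ≤ i) : natDigit b k i = 0 :=
  digit_zero_of_lt (lt_of_lt_of_le (Nat.lt_pow_self (n := k) (by omega))
    (Nat.pow_le_pow_right (by omega) h))

lemma digit_low {b : ℕ} (hb : 2 ≤ b) (d r i n : ℕ) (hi : i < n) :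
    natDigit b (d * b ^ n + r) i = natDigit b r i := by
  have h1 : d * b ^ n + r = b ^ i * (d * b ^ (n - i)) + r := by
    rw [← mul_assoc, mul_comm (b ^ i), mul_assoc, ← pow_add]
    congr 3
    omega
  have hbp : 0 < b ^ i := Nat.pow_pos (by omega)
  rw [natDigit, h1, Nat.mul_add_div hbp]
  have h2 : n - i = (n - i - 1) + 1 := by omega
  rw [h2, pow_succ, ← mul_assoc, natDigit, add_comm (d * b ^ (n - i - 1) * b)]
  rw [Nat.add_mul_mod_self_right]

lemma digit_top {b : ℕ} (hb : 2 ≤ b) (d r n : ℕ) (hr : r < b ^ n) (hd : d < b) :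
    natDigit b (d * b ^ n + r) n = d := by
  have hbp : 0 < b ^ n := Nat.pow_pos (by omega)
  rw [natDigit, mul_comm d, Nat.mul_add_div hbp, Nat.div_eq_of_lt hr, add_zero,
    Nat.mod_eq_of_lt hd]

lemma wt_eq {b : ℕ} (hb : 2 ≤ b) (e : ℕ → ℝ) {k n : ℕ} (h : k < b ^ n) :
    (∑ i ∈ Finset.range k, if natDigit b k i ≠ 0 then e i else 0) =
      ∑ i ∈ Finset.range n, if natDigit b k i ≠ 0 then e i else 0 := by
  have h1 : ∀ m : ℕ, (∑ i ∈ Finset.range (max k n), if natDigit b k i ≠ 0 then e i else 0) =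
      ∑ i ∈ Finset.range k, if natDigit b k i ≠ 0 then e i else 0 := by
    intro _
    refine (Finset.sum_subset (Finset.range_subset_range.2 (le_max_left _ _)) ?_).symm
    intro i _ hi
    simp only [Finset.mem_range, not_lt] at hi
    simp [digit_zero_of_le hb hi]
  have h2 : (∑ i ∈ Finset.range (max k n), if natDigit b k i ≠ 0 then e i else 0) =
      ∑ i ∈ Finset.range n, if natDigit b k i ≠ 0 then e i else 0 := by
    refine (Finset.sum_subset (Finset.range_subset_range.2 (le_max_right _ _)) ?_).symm
    intro i _ hi
    simp only [Finset.mem_range, not_lt] at hi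
    have : k < b ^ i := lt_of_lt_of_le h (Nat.pow_le_pow_right (by omega) hi)
    simp [digit_zero_of_lt this]
  rw [← h1 0, h2]

lemma key1 {b : ℕ} (hb : 2 ≤ b) {X : ℝ} (hX0 : 0 < X) (e : ℕ → ℝ) (n : ℕ) :
    (∑ k ∈ Finset.range (b ^ n),
        X ^ (∑ i ∈ Finset.range n, if natDigit b k i ≠ 0 then e i else 0)) =
      ∏ i ∈ Finset.range n, (1 + ((b : ℝ) - 1) * X ^ e i) := by
  induction n with
  | zero => simp
  | succ n ih =>
    have hbp : 0 < b ^ n := Nat.pow_pos (by omega)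
    have hsplit : (∑ k ∈ Finset.range (b ^ (n + 1)),
        X ^ (∑ i ∈ Finset.range (n + 1), if natDigit b k i ≠ 0 then e i else 0)) =
        ∑ p ∈ Finset.range b ×ˢ Finset.range (b ^ n),
          X ^ (∑ i ∈ Finset.range (n + 1),
            if natDigit b (p.1 * b ^ n + p.2) i ≠ 0 then e i else 0) := by
      refine (Finset.sum_nbij' (fun p => p.1 * b ^ n + p.2)
        (fun k => (k / b ^ n, k % b ^ n)) ?_ ?_ ?_ ?_ ?_).symm
      · rintro ⟨d, r⟩ hp
        simp only [Finset.mem_product, Finset.mem_range] at hp ⊢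
        calc d * b ^ n + r < d * b ^ n + b ^ n := by omega
          _ = (d + 1) * b ^ n := by ring
          _ ≤ b * b ^ n := Nat.mul_le_mul_right _ (by omega)
          _ = b ^ (n + 1) := by ring
      · intro k hk
        simp only [Finset.mem_range, pow_succ] at hk
        simp only [Finset.mem_product, Finset.mem_range]
        exact ⟨Nat.div_lt_of_lt_mul (by omega), Nat.mod_lt _ hbp⟩
      · rintro ⟨d, r⟩ hp
        simp only [Finset.mem_product, Finset.mem_range] at hp
        have : (d * b ^ n + r) / b ^ n = d := by
          rw [mul_comm d, Nat.mul_add_div hbp, Nat.div_eq_of_lt hp.2, add_zero]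
        have h2 : (d * b ^ n + r) % b ^ n = r := by
          rw [add_comm, Nat.add_mul_mod_self_right, Nat.mod_eq_of_lt hp.2]
        simp [this, h2]
      · intro k _
        simp only []
        rw [mul_comm (k / b ^ n)]
        exact Nat.mod_add_div' k (b ^ n) ▸ Nat.div_add_mod k (b ^ n)
      · intro k _; rfl
    rw [hsplit, Finset.sum_product]
    have hterm : ∀ d ∈ Finset.range b, ∀ r ∈ Finset.range (b ^ n),
        X ^ (∑ i ∈ Finset.range (n + 1),
            if natDigit b (d * b ^ n + r) i ≠ 0 then e i else 0) =
          (if d ≠ 0 then X ^ e n else 1) *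
            X ^ (∑ i ∈ Finset.range n, if natDigit b r i ≠ 0 then e i else 0) := by
      intro d hd r hr
      simp only [Finset.mem_range] at hd hr
      rw [Finset.sum_range_succ, digit_top hb d r n hr hd]
      have hlow : (∑ i ∈ Finset.range n,
          if natDigit b (d * b ^ n + r) i ≠ 0 then e i else 0) =
          ∑ i ∈ Finset.range n, if natDigit b r i ≠ 0 then e i else 0 := by
        refine Finset.sum_congr rfl fun i hi => ?_
        rw [digit_low hb d r i n (Finset.mem_range.1 hi)]
      rw [hlow, Real.rpow_add hX0, mul_comm]
      congr 1
      split <;> simp [Real.rpow_zero]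
    rw [Finset.sum_congr rfl fun d hd => Finset.sum_congr rfl fun r hr => hterm d hd r hr]
    have : (∑ d ∈ Finset.range b, ∑ r ∈ Finset.range (b ^ n),
        (if d ≠ 0 then X ^ e n else 1) *
          X ^ (∑ i ∈ Finset.range n, if natDigit b r i ≠ 0 then e i else 0)) =
        (∑ d ∈ Finset.range b, if d ≠ 0 then X ^ e n else 1) *
          ∑ r ∈ Finset.range (b ^ n),
            X ^ (∑ i ∈ Finset.range n, if natDigit b r i ≠ 0 then e i else 0) := by
      rw [Finset.sum_mul]
      exact Finset.sum_congr rfl fun d _ => (Finset.mul_sum _ _ _).symm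
    rw [this, ih, Finset.prod_range_succ]
    have hd : (∑ d ∈ Finset.range b, if d ≠ 0 then X ^ e n else (1 : ℝ)) =
        1 + ((b : ℝ) - 1) * X ^ e n := by
      have : ∀ d : ℕ, (if d ≠ 0 then X ^ e n else (1 : ℝ)) =
          (if d = 0 then 1 - X ^ e n else 0) + X ^ e n := by
        intro d; split <;> simp_all
      rw [Finset.sum_congr rfl fun d _ => this d, Finset.sum_add_distrib,
        Finset.sum_ite_eq' (Finset.range b) 0 (fun _ => 1 - X ^ e n)]
      simp only [Finset.mem_range, Finset.sum_const, Finset.card_range, nsmul_eq_mul]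
      have hb0 : (0 : ℕ) < b := by omega
      rw [if_pos hb0]
      ring
    rw [hd]
    ring

lemma oneDim {b : ℕ} (hb : 2 ≤ b) {X : ℝ} (hX0 : 0 < X) (hX1 : X < 1) (e : ℕ → ℝ)
    (hsum : Summable fun i => X ^ e i) :
    Multipliable (fun i : ℕ => 1 + ((b : ℝ) - 1) * X ^ e i) ∧
    HasSum (fun k : ℕ => X ^ (∑ i ∈ Finset.range k, if natDigit b k i ≠ 0 then e i else 0))
      (∏' i, (1 + ((b : ℝ) - 1) * X ^ e i)) := by
  set f : ℕ → ℝ := fun i => 1 + ((b : ℝ) - 1) * X ^ e i with hf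
  have hb1 : (1 : ℝ) ≤ (b : ℝ) := by
    have : (2 : ℝ) ≤ (b : ℝ) := by exact_mod_cast hb
    linarith
  have hc : ∀ i, 0 ≤ ((b : ℝ) - 1) * X ^ e i := fun i =>
    mul_nonneg (by linarith) (Real.rpow_nonneg hX0.le _)
  have hf1 : ∀ i, 1 ≤ f i := fun i => le_add_of_nonneg_right (hc i)
  have hfpos : ∀ i, 0 < f i := fun i => lt_of_lt_of_le one_pos (hf1 i)
  -- multipliability
  have hlog : Summable fun i => Real.log (f i) := by
    refine Summable.of_nonneg_of_le (fun i => Real.log_nonneg (hf1 i)) (fun i => ?_)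
      (hsum.mul_left ((b : ℝ) - 1))
    have := Real.log_le_sub_one_of_pos (hfpos i)
    simpa [hf] using this
  have hmul : Multipliable f := by
    have h1 : HasProd (Real.exp ∘ fun i => Real.log (f i)) (Real.exp (∑' i, Real.log (f i))) :=
      hlog.hasSum.rexp
    have h2 : (Real.exp ∘ fun i => Real.log (f i)) = f := by
      funext i; simp [Function.comp, Real.exp_log (hfpos i)]
    exact ⟨_, h2 ▸ h1⟩
  set g : ℕ → ℝ := fun k =>
    X ^ (∑ i ∈ Finset.range k, if natDigit b k i ≠ 0 then e i else 0) with hg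
  have hgnn : ∀ k, 0 ≤ g k := fun k => Real.rpow_nonneg hX0.le _
  have hbd : ∀ n : ℕ, (∑ k ∈ Finset.range n, g k) ≤ ∏' i, f i := by
    intro n
    have h1 : (∑ k ∈ Finset.range n, g k) ≤ ∑ k ∈ Finset.range (b ^ n), g k := by
      refine Finset.sum_le_sum_of_subset_of_nonneg
        (Finset.range_subset_range.2 (Nat.lt_pow_self (n := n) (by omega)).le) fun k _ _ => hgnn k
    have h2 : (∑ k ∈ Finset.range (b ^ n), g k) = ∏ i ∈ Finset.range n, f i := by
      rw [← key1 hb hX0 e n]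
      refine Finset.sum_congr rfl fun k hk => ?_
      rw [hg]
      simp only
      rw [wt_eq hb e (Finset.mem_range.1 hk)]
    have hfprodnn : ∀ t : Finset ℕ, 0 ≤ ∏ i ∈ t, f i := fun t =>
      Finset.prod_nonneg fun i _ => (hfpos i).le
    have hmono : Monotone fun m => ∏ i ∈ Finset.range m, f i := by
      refine monotone_nat_of_le_succ fun m => ?_
      rw [Finset.prod_range_succ]
      exact le_mul_of_one_le_right (hfprodnn _) (hf1 m)
    have h3 : (∏ i ∈ Finset.range n, f i) ≤ ∏' i, f i := by
      refine ge_of_tendsto hmul.hasProd.tendsto_prod_nat ?_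
      exact Filter.eventually_atTop.2 ⟨n, fun m hm => hmono hm⟩
    linarith
  have hgsum : Summable g := summable_of_sum_range_le hgnn hbd
  have hlim1 : Tendsto (fun n => ∑ k ∈ Finset.range (b ^ n), g k) atTop (nhds (∑' k, g k)) :=
    hgsum.hasSum.tendsto_sum_nat.comp (tendsto_pow_atTop_atTop_of_one_lt (by omega))
  have hlim2 : Tendsto (fun n => ∑ k ∈ Finset.range (b ^ n), g k) atTop (nhds (∏' i, f i)) := by
    have heq : (fun n => ∑ k ∈ Finset.range (b ^ n), g k) =
        fun n => ∏ i ∈ Finset.range n, f i := by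
      funext n
      rw [← key1 hb hX0 e n]
      refine Finset.sum_congr rfl fun k hk => ?_
      rw [hg]; simp only
      rw [wt_eq hb e (Finset.mem_range.1 hk)]
    rw [heq]
    exact hmul.hasProd.tendsto_prod_nat
  have : (∑' k, g k) = ∏' i, f i := tendsto_nhds_unique hlim1 hlim2
  exact ⟨hmul, this ▸ hgsum.hasSum⟩

lemma piHasSum : ∀ (s : ℕ) (g : Fin s → ℕ → ℝ) (T : Fin s → ℝ),
    (∀ j k, 0 ≤ g j k) → (∀ j, HasSum (g j) (T j)) →
    HasSum (fun k : Fin s → ℕ => ∏ j, g j (k j)) (∏ j, T j) := by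
  intro s
  induction s with
  | zero =>
    intro g T _ _
    have h : HasSum (fun k : Fin 0 → ℕ => ∏ j, g j (k j))
        (∑ k : Fin 0 → ℕ, ∏ j, g j (k j)) := hasSum_fintype _
    simpa using h
  | succ s ih =>
    intro g T hnn hs
    obtain ⟨H, hH⟩ : ∃ H : (Fin s → ℕ) → ℝ, H = fun k => ∏ j : Fin s, g j.succ (k j) :=
      ⟨_, rfl⟩
    obtain ⟨G, hG⟩ : ∃ G : ℕ → ℝ, G = g 0 := ⟨_, rfl⟩
    have hI : HasSum H (∏ j : Fin s, T j.succ) := by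
      rw [hH]
      exact ih (fun j => g j.succ) (fun j => T j.succ) (fun j k => hnn j.succ k)
        (fun j => hs j.succ)
    have h0 : HasSum G (T 0) := by rw [hG]; exact hs 0
    have hA : 0 ≤ G := Pi.le_def.mpr fun k => by rw [hG]; exact hnn 0 k
    have hB : 0 ≤ H := Pi.le_def.mpr fun k => by
      rw [hH]; exact Finset.prod_nonneg fun j _ => hnn j.succ _
    have hsummul : Summable fun p : ℕ × (Fin s → ℕ) => G p.1 * H p.2 :=
      h0.summable.mul_of_nonneg hI.summable hA hB
    have hmul : HasSum (fun p : ℕ × (Fin s → ℕ) => G p.1 * H p.2)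
        (T 0 * ∏ j : Fin s, T j.succ) := by
      have := h0.mul_eq hI hsummul.hasSum
      exact this ▸ hsummul.hasSum
    have hequiv : HasSum ((fun k : Fin (s + 1) → ℕ => ∏ j, g j (k j)) ∘
        (Fin.consEquiv fun _ : Fin (s + 1) => ℕ)) (T 0 * ∏ j : Fin s, T j.succ) := by
      have heq : ((fun k : Fin (s + 1) → ℕ => ∏ j, g j (k j)) ∘
          (Fin.consEquiv fun _ : Fin (s + 1) => ℕ)) =
          fun p : ℕ × (Fin s → ℕ) => G p.1 * H p.2 := by
        funext p
        simp [Fin.consEquiv, Fin.prod_univ_succ, hG, hH]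
      rw [heq]
      exact hmul
    rw [Fin.prod_univ_succ]
    exact (Equiv.hasSum_iff _).1 hequiv

end S19

/-- for `X ∈ (0,1)`, `∑_{k ∈ ℕ₀^s} X^{μ_a(k)}` converges and equals the
convergent infinite product `∏_{j=1}^s ∏_{i=1}^∞ (1 + (b-1)·X^{i+a_j})`, and likewise for the
modified Dick weight `μ'_a` with exponents `max(i+a_j, 1)`. -/
theorem statement19 (b : ℕ) (hb : 2 ≤ b) (s : ℕ) (a : Fin s → ℝ)
    (X : ℝ) (hX0 : 0 < X) (hX1 : X < 1) :
    (∀ j : Fin s, Multipliable fun i : ℕ => 1 + ((b : ℝ) - 1) * X ^ ((i : ℝ) + 1 + a j)) ∧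
    HasSum (fun k : Fin s → ℕ => X ^ dickWtV b a k)
      (∏ j : Fin s, ∏' i : ℕ, (1 + ((b : ℝ) - 1) * X ^ ((i : ℝ) + 1 + a j))) ∧
    (∀ j : Fin s, Multipliable fun i : ℕ =>
      1 + ((b : ℝ) - 1) * X ^ max ((i : ℝ) + 1 + a j) 1) ∧
    HasSum (fun k : Fin s → ℕ => X ^ mdickWtV b a k)
      (∏ j : Fin s, ∏' i : ℕ, (1 + ((b : ℝ) - 1) * X ^ max ((i : ℝ) + 1 + a j) 1)) := by
  classical
  have hb1R : (1 : ℝ) ≤ (b : ℝ) := by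
    have : (2 : ℝ) ≤ (b : ℝ) := by exact_mod_cast hb
    linarith
  have hgeo : ∀ c : ℝ, Summable fun i : ℕ => X ^ ((i : ℝ) + 1 + c) := by
    intro c
    have h1 : (fun i : ℕ => X ^ ((i : ℝ) + 1 + c)) =
        fun i : ℕ => X ^ i * X ^ ((1 : ℝ) + c) := by
      funext i
      rw [show (i : ℝ) + 1 + c = (i : ℝ) + (1 + c) by ring, Real.rpow_add hX0,
        Real.rpow_natCast]
    rw [h1]
    exact (summable_geometric_of_lt_one hX0.le hX1).mul_right _
  have hgeo' : ∀ c : ℝ, Summable fun i : ℕ => X ^ max ((i : ℝ) + 1 + c) 1 := by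
    intro c
    refine Summable.of_nonneg_of_le (fun i => Real.rpow_nonneg hX0.le _) (fun i => ?_)
      (hgeo c)
    exact Real.rpow_le_rpow_of_exponent_ge hX0 hX1.le (le_max_left _ _)
  have h1 : ∀ j : Fin s,
      Multipliable (fun i : ℕ => 1 + ((b : ℝ) - 1) * X ^ ((i : ℝ) + 1 + a j)) ∧
      HasSum (fun k : ℕ => X ^ dickWt b (a j) k)
        (∏' i : ℕ, (1 + ((b : ℝ) - 1) * X ^ ((i : ℝ) + 1 + a j))) := by
    intro j
    have h := S19.oneDim hb hX0 hX1 (fun i => (i : ℝ) + 1 + a j) (hgeo (a j))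
    exact ⟨h.1, h.2⟩
  have h2 : ∀ j : Fin s,
      Multipliable (fun i : ℕ => 1 + ((b : ℝ) - 1) * X ^ max ((i : ℝ) + 1 + a j) 1) ∧
      HasSum (fun k : ℕ => X ^ mdickWt b (a j) k)
        (∏' i : ℕ, (1 + ((b : ℝ) - 1) * X ^ max ((i : ℝ) + 1 + a j) 1)) := by
    intro j
    have h := S19.oneDim hb hX0 hX1 (fun i => max ((i : ℝ) + 1 + a j) 1) (hgeo' (a j))
    exact ⟨h.1, h.2⟩
  refine ⟨fun j => (h1 j).1, ?_, fun j => (h2 j).1, ?_⟩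
  · have h := S19.piHasSum s (fun j m => X ^ dickWt b (a j) m)
      (fun j => ∏' i : ℕ, (1 + ((b : ℝ) - 1) * X ^ ((i : ℝ) + 1 + a j)))
      (fun j m => Real.rpow_nonneg hX0.le _) (fun j => (h1 j).2)
    have heq : (fun k : Fin s → ℕ => ∏ j, X ^ dickWt b (a j) (k j)) =
        fun k : Fin s → ℕ => X ^ dickWtV b a k := by
      funext k
      rw [dickWtV, Real.rpow_sum_of_pos hX0]
    rwa [heq] at h
  · have h := S19.piHasSum s (fun j m => X ^ mdickWt b (a j) m)
      (fun j => ∏' i : ℕ, (1 + ((b : ℝ) - 1) * X ^ max ((i : ℝ) + 1 + a j) 1))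
      (fun j m => Real.rpow_nonneg hX0.le _) (fun j => (h2 j).2)
    have heq : (fun k : Fin s → ℕ => ∏ j, X ^ mdickWt b (a j) (k j)) =
        fun k : Fin s → ℕ => X ^ mdickWtV b a k := by
      funext k
      rw [mdickWtV, Real.rpow_sum_of_pos hX0]
    rwa [heq] at h


end
end
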